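/- arXiv:1408.3962 — 4 statements merged into one kernel-verified Lean document; each statement's English description precedes it below -/
import Mathlib

section
/- Let O be a partial orientation of a connected multigraph with no directed cut (directed cocycle), and let e = {u,v} be an unoriented non-bridge edge. Then it is impossible that both orientations of e each create a directed cut: if orienting e one way yields a directed cut (X, X^c) and the other way yields a directed cut (Y, Y^c), then either (X ∩ Y, X^c ∪ Y^c) or (X ∩ Y^c, X^c ∪ Y) is already a directed cut of O, a contradiction. -/
open Classical

noncomputable section

/-- A finite multigraph, given by a finite vertex type, a finite edge type, and
two endpoint maps (which also provide a built-in reference direction for each edge). -/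
structure Multigraph where
  V : Type
  E : Type
  [fintypeV : Fintype V]
  [fintypeE : Fintype E]
  fst : E → V
  snd : E → V

attribute [instance] Multigraph.fintypeV Multigraph.fintypeE

namespace Multigraph

variable (G : Multigraph)

/-- Adjacency between vertices using only edges in `S`. -/
def adjOn (S : Set G.E) (u v : G.V) : Prop :=
  ∃ e ∈ S, (G.fst e = u ∧ G.snd e = v) ∨ (G.fst e = v ∧ G.snd e = u)

/-- Reachability (in the undirected sense) using only edges in `S`. -/
def reachOn (S : Set G.E) : G.V → G.V → Prop :=
  Relation.ReflTransGen (G.adjOn S)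

def Connected : Prop := ∀ u v : G.V, G.reachOn Set.univ u v

def IsLoop (e : G.E) : Prop := G.fst e = G.snd e

def IsBridge (e : G.E) : Prop := ¬ G.reachOn {f | f ≠ e} (G.fst e) (G.snd e)

/-- Number of connected components of the spanning subgraph with edge set `S`. -/
def comps (S : Set G.E) : ℕ := Nat.card (Quot (G.reachOn S))

/-- Rank of an edge set: `|V|` minus the number of components it spans. -/
def rk (S : Set G.E) : ℕ := Fintype.card G.V - G.comps S

/-- The Tutte polynomial, via the corank-nullity (subgraph) expansion. -/
def tutte (x y : ℚ) : ℚ :=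
  ∑ S : Finset G.E,
    (x - 1) ^ (G.rk Set.univ - G.rk (↑S : Set G.E)) * (y - 1) ^ (S.card - G.rk (↑S : Set G.E))

/-- The genus (cycle rank) `|E| - |V| + 1` of a connected multigraph. -/
def genus : ℕ := Fintype.card G.E + 1 - Fintype.card G.V

/-- A partial orientation: each edge is unoriented (`none`), oriented in the reference
direction `fst → snd` (`some true`), or oriented oppositely (`some false`). -/
abbrev PartialOrientation := G.E → Option Bool

/-- The tail of edge `e` traversed in direction `b` (`true` = `fst → snd`). -/
def dtail (e : G.E) (b : Bool) : G.V := if b then G.fst e else G.snd e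

/-- The head of edge `e` traversed in direction `b` (`true` = `fst → snd`). -/
def dhead (e : G.E) (b : Bool) : G.V := if b then G.snd e else G.fst e

/-- Directed adjacency under a partial orientation. -/
def dAdj (O : G.PartialOrientation) (u v : G.V) : Prop :=
  ∃ e b, O e = some b ∧ G.dtail e b = u ∧ G.dhead e b = v

/-- Directed reachability under a partial orientation. -/
def dReach (O : G.PartialOrientation) : G.V → G.V → Prop :=
  Relation.ReflTransGen (G.dAdj O)

/-- A partial orientation is acyclic iff it contains no directed cycle, equivalently there
is no oriented edge together with a directed path from its head back to its tail. -/
def Acyclic (O : G.PartialOrientation) : Prop :=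
  ¬ ∃ e b, O e = some b ∧ G.dReach O (G.dhead e b) (G.dtail e b)

/-- `e` crosses the cut determined by the vertex set `X`. -/
def crosses (X : Set G.V) (e : G.E) : Prop := ¬ ((G.fst e ∈ X) ↔ (G.snd e ∈ X))

/-- `(X, Xᶜ)` is a directed cut of `O`: the cut is nonempty and every crossing edge is
oriented from `X` to `Xᶜ`. -/
def IsDirCut (O : G.PartialOrientation) (X : Set G.V) : Prop :=
  (∃ e, G.crosses X e) ∧
  ∀ e, G.crosses X e →
    (G.fst e ∈ X → O e = some true) ∧ (G.snd e ∈ X → O e = some false)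

/-- A partial orientation is strongly connected iff it contains no directed cut. -/
def StronglyConnected (O : G.PartialOrientation) : Prop :=
  ¬ ∃ X, G.IsDirCut O X

/-- A directed cycle of `O`: a nonempty cyclically chained list of oriented steps using
pairwise distinct edges, each oriented in `O` as traversed. -/
def IsDCycle (O : G.PartialOrientation) (c : List (G.E × Bool)) : Prop :=
  c ≠ [] ∧ (∀ s ∈ c, O s.1 = some s.2) ∧
  List.Chain' (fun s t => G.dhead s.1 s.2 = G.dtail t.1 t.2) (c ++ c.take 1) ∧
  (c.map Prod.fst).Nodup

/-- A half-open path: a directed path (all steps but the last oriented in `O`) followed by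
an unoriented edge, imagined with the direction that would extend the path. -/
def IsHalfOpenPath (O : G.PartialOrientation) (p : List (G.E × Bool)) : Prop :=
  2 ≤ p.length ∧
  List.Chain' (fun s t => G.dhead s.1 s.2 = G.dtail t.1 t.2) p ∧
  (p.map Prod.fst).Nodup ∧
  (∀ s ∈ p.dropLast, O s.1 = some s.2) ∧
  ∀ h : p ≠ [], O (p.getLast h).1 = none

/-- `O'` is obtained from `O` by reversing one directed cut. -/
def cutRev (O O' : G.PartialOrientation) : Prop :=
  ∃ X, G.IsDirCut O X ∧ (∀ e, ¬ G.crosses X e → O' e = O e) ∧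
    (∀ e, G.crosses X e → O' e = (O e).map not)

/-- `O'` is obtained from `O` by reversing one directed cycle. -/
def cycleRev (O O' : G.PartialOrientation) : Prop :=
  ∃ c, G.IsDCycle O c ∧ (∀ e, e ∉ c.map Prod.fst → O' e = O e) ∧
    (∀ s ∈ c, O' s.1 = some (!s.2))

/-- `O'` is obtained from `O` by a Jacob's ladder cascade along a half-open path:
the first edge becomes unoriented and all other edges get the reversed direction. -/
def cascade (O O' : G.PartialOrientation) : Prop :=
  ∃ p, G.IsHalfOpenPath O p ∧ (∀ e, e ∉ p.map Prod.fst → O' e = O e) ∧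
    (∀ h : p ≠ [], O' (p.head h).1 = none) ∧
    (∀ s ∈ p.tail, O' s.1 = some (!s.2))

/-- An edge pivot at a vertex `v`: unorient an edge `e'` oriented into `v` and orient a
previously unoriented edge `e` toward `v`. -/
def pivot (O O' : G.PartialOrientation) : Prop :=
  ∃ e e' b b', e ≠ e' ∧ O e = none ∧ O e' = some b' ∧
    G.dhead e b = G.dhead e' b' ∧
    O' e = some b ∧ O' e' = none ∧ ∀ f, f ≠ e → f ≠ e' → O' f = O f

/-- A directed cut of `O` is minimal w.r.t. `(<, A)` if its `<`-minimum crossing edge is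
oriented as in the reference orientation `A`. -/
def MinimalCut [LinearOrder G.E] (A : G.E → Bool) (O : G.PartialOrientation)
    (X : Set G.V) : Prop :=
  ∃ e, G.crosses X e ∧ (∀ e', G.crosses X e' → e ≤ e') ∧ O e = some (A e)

/-- A partial orientation is cut minimal if every directed cut in it is minimal. -/
def CutMinimal [LinearOrder G.E] (A : G.E → Bool) (O : G.PartialOrientation) : Prop :=
  ∀ X, G.IsDirCut O X → G.MinimalCut A O X

/-- A list of steps is minimal w.r.t. `(<, A)` if its `<`-minimum edge is traversed in the
direction given by the reference orientation `A`. -/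
def MinimalSteps [LinearOrder G.E] (A : G.E → Bool) (c : List (G.E × Bool)) : Prop :=
  ∃ s ∈ c, (∀ t ∈ c, s.1 ≤ t.1) ∧ s.2 = A s.1

/-- A partial orientation is cycle minimal if every directed cycle in it is minimal. -/
def CycleMinimal [LinearOrder G.E] (A : G.E → Bool) (O : G.PartialOrientation) : Prop :=
  ∀ c, G.IsDCycle O c → G.MinimalSteps A c

/-- A partial orientation is cycle-path minimal if every directed cycle and every
half-open path in it is minimal. -/
def CyclePathMinimal [LinearOrder G.E] (A : G.E → Bool) (O : G.PartialOrientation) : Prop :=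
  G.CycleMinimal A O ∧ ∀ p, G.IsHalfOpenPath O p → G.MinimalSteps A p

/-- The indegree of a vertex: the number of edges oriented toward it. -/
def indeg (O : G.PartialOrientation) (v : G.V) : ℕ :=
  Nat.card {e : G.E // ∃ b, O e = some b ∧ G.dhead e b = v}

/-- Orient the (previously unoriented) edge `e` in direction `b`. -/
def orient (O : G.PartialOrientation) (e : G.E) (b : Bool) : G.PartialOrientation :=
  fun f => if f = e then some b else O f

/-- Deletion of the edge `e`. -/
def deleteEdge (e : G.E) : Multigraph where
  V := G.V
  E := {f : G.E // f ≠ e}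
  fintypeE := Subtype.fintype _
  fst := fun f => G.fst f.1
  snd := fun f => G.snd f.1

/-- Contraction of the edge `e`: identify its two endpoints and remove `e`. -/
def contractEdge (e : G.E) : Multigraph where
  V := Quot (fun a b => a = G.fst e ∧ b = G.snd e)
  E := {f : G.E // f ≠ e}
  fintypeV := Fintype.ofSurjective (Quot.mk _) (Quot.mk_surjective)
  fintypeE := Subtype.fintype _
  fst := fun f => Quot.mk _ (G.fst f.1)
  snd := fun f => Quot.mk _ (G.snd f.1)

/-- The number of acyclic partial orientations of `G`. -/
def numAcyclic : ℕ := Nat.card {O : G.PartialOrientation // G.Acyclic O}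

/-- The number of strongly connected partial orientations of `G`. -/
def numStrong : ℕ := Nat.card {O : G.PartialOrientation // G.StronglyConnected O}

end Multigraph

/-!
Suppose orienting `e` forward creates a directed cut `X` and orienting it backward creates
a directed cut `Y`. Then `e` runs from `X \ Y` to `Y \ X`, so it crosses neither `X ∩ Y` nor
`X ∪ Y`, and every other edge leaving `X ∩ Y` or `X ∪ Y` leaves `X` or `Y`, hence is oriented
outward. Strong connectivity thus forbids any edge crossing `X ∩ Y` or `X ∪ Y`. As `e` is not a
bridge, another edge `f` crosses `X`; it must join `X \ Y` to `Y \ X`, and so cannot be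
oriented out of both `X` and `Y`.
-/

namespace Multigraph

variable {G : Multigraph}

/-- Only meaningful for an edge `f` crossing `X`; for one with both ends in `X` it is false. -/
def OrientedOut (O : G.PartialOrientation) (X : Set G.V) (f : G.E) : Prop :=
  (G.fst f ∈ X → O f = some true) ∧ (G.snd f ∈ X → O f = some false)

theorem isDirCut_iff {O : G.PartialOrientation} {X : Set G.V} :
    G.IsDirCut O X ↔ (∃ f, G.crosses X f) ∧ ∀ f, G.crosses X f → G.OrientedOut O X f :=
  Iff.rfl

theorem StronglyConnected.not_crosses {O : G.PartialOrientation} (hO : G.StronglyConnected O)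
    {Z : Set G.V} (hZ : ∀ f, G.crosses Z f → G.OrientedOut O Z f) (f : G.E) :
    ¬ G.crosses Z f :=
  fun hf => hO ⟨Z, isDirCut_iff.mpr ⟨⟨f, hf⟩, hZ⟩⟩

theorem exists_crosses_of_reachOn {S : Set G.E} {Z : Set G.V} {u v : G.V}
    (h : G.reachOn S u v) (hu : u ∈ Z) (hv : v ∉ Z) : ∃ f ∈ S, G.crosses Z f := by
  induction h with
  | refl => exact absurd hu hv
  | @tail b c _ hbc ih =>
    by_cases hb : b ∈ Z
    · obtain ⟨f, hfS, hf⟩ := hbc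
      refine ⟨f, hfS, ?_⟩
      rcases hf with ⟨rfl, rfl⟩ | ⟨rfl, rfl⟩ <;> simp [crosses, hb, hv]
    · exact ih hb

theorem exists_crosses_ne_of_not_isBridge {e : G.E} (he : ¬ G.IsBridge e) {X : Set G.V}
    (h₁ : G.fst e ∈ X) (h₂ : G.snd e ∉ X) : ∃ f ≠ e, G.crosses X f :=
  exists_crosses_of_reachOn (not_not.mp he) h₁ h₂

theorem orientedOut_orient_of_ne {O : G.PartialOrientation} {X : Set G.V} {e f : G.E}
    {b : Bool} (hf : f ≠ e) : G.OrientedOut (G.orient O e b) X f ↔ G.OrientedOut O X f := by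
  simp only [OrientedOut, orient, if_neg hf]

theorem orientedOut_inter {O : G.PartialOrientation} {X Y : Set G.V} {f : G.E}
    (hf : G.crosses (X ∩ Y) f) (hX : G.crosses X f → G.OrientedOut O X f)
    (hY : G.crosses Y f → G.OrientedOut O Y f) : G.OrientedOut O (X ∩ Y) f := by
  simp only [crosses, OrientedOut, Set.mem_inter_iff] at *
  by_cases hfX : G.fst f ∈ X <;> by_cases hsX : G.snd f ∈ X <;> tauto

theorem orientedOut_union {O : G.PartialOrientation} {X Y : Set G.V} {f : G.E}
    (hf : G.crosses (X ∪ Y) f) (hX : G.crosses X f → G.OrientedOut O X f)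
    (hY : G.crosses Y f → G.OrientedOut O Y f) : G.OrientedOut O (X ∪ Y) f := by
  simp only [crosses, OrientedOut, Set.mem_union] at *
  by_cases hfX : G.fst f ∈ X <;> by_cases hsX : G.snd f ∈ X <;> tauto

theorem crosses_of_not_crosses_inter_union {X Y : Set G.V} {f : G.E} (hX : G.crosses X f)
    (hi : ¬ G.crosses (X ∩ Y) f) (hu : ¬ G.crosses (X ∪ Y) f) : G.crosses Y f := by
  simp only [crosses, Set.mem_inter_iff, Set.mem_union] at *
  tauto

theorem not_orientedOut_of_not_crosses_inter_union {O : G.PartialOrientation} {X Y : Set G.V}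
    {f : G.E} (hX : G.crosses X f) (hi : ¬ G.crosses (X ∩ Y) f) (hu : ¬ G.crosses (X ∪ Y) f)
    (hOX : G.OrientedOut O X f) : ¬ G.OrientedOut O Y f := by
  simp only [crosses, OrientedOut, Set.mem_inter_iff, Set.mem_union] at *
  by_cases hfX : G.fst f ∈ X <;> by_cases hfY : G.fst f ∈ Y <;> simp_all

theorem orientedOut_of_isDirCut_orient {O : G.PartialOrientation} {e f : G.E} {b : Bool}
    {X : Set G.V} (hX : G.IsDirCut (G.orient O e b) X) (hf : f ≠ e) (hfX : G.crosses X f) :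
    G.OrientedOut O X f :=
  (orientedOut_orient_of_ne hf).mp ((isDirCut_iff.mp hX).2 f hfX)

theorem StronglyConnected.mem_of_isDirCut_orient {O : G.PartialOrientation}
    (hO : G.StronglyConnected O) {e : G.E} {b : Bool} {X : Set G.V}
    (hX : G.IsDirCut (G.orient O e b) X) : G.dtail e b ∈ X ∧ G.dhead e b ∉ X := by
  obtain ⟨⟨g, hg⟩, hout⟩ := isDirCut_iff.mp hX
  have hcross : G.crosses X e := by
    by_contra he
    exact hO.not_crosses (fun f hf =>
      orientedOut_of_isDirCut_orient hX (fun (hfe : f = e) => he (hfe ▸ hf)) hf) g hg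
  have := hout e hcross
  cases b <;> simp_all [crosses, OrientedOut, orient, dtail, dhead]

end Multigraph

open Multigraph in
theorem stmt1_general (G : Multigraph) (O : G.PartialOrientation)
    (hsc : G.StronglyConnected O) (e : G.E) (hbr : ¬ G.IsBridge e) :
    ¬ (¬ G.StronglyConnected (G.orient O e true) ∧
       ¬ G.StronglyConnected (G.orient O e false)) := by
  rintro ⟨hX, hY⟩
  obtain ⟨X, hX⟩ := not_not.mp hX
  obtain ⟨Y, hY⟩ := not_not.mp hY
  obtain ⟨heX, heX'⟩ := hsc.mem_of_isDirCut_orient hX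
  obtain ⟨heY, heY'⟩ := hsc.mem_of_isDirCut_orient hY
  simp only [dtail, dhead, Bool.false_eq_true, if_true, if_false] at heX heX' heY heY'
  have ne_of_crosses {Z : Set G.V} (hZ : ¬ G.crosses Z e) {f : G.E} (hf : G.crosses Z f) :
      f ≠ e := fun h => hZ (h ▸ hf)
  have inter_closed : ∀ f, ¬ G.crosses (X ∩ Y) f := by
    have he : ¬ G.crosses (X ∩ Y) e := by simp [crosses, heX, heX', heY, heY']
    exact hsc.not_crosses fun g hg =>
      orientedOut_inter hg (orientedOut_of_isDirCut_orient hX (ne_of_crosses he hg))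
        (orientedOut_of_isDirCut_orient hY (ne_of_crosses he hg))
  have union_closed : ∀ f, ¬ G.crosses (X ∪ Y) f := by
    have he : ¬ G.crosses (X ∪ Y) e := by simp [crosses, heX, heX', heY, heY']
    exact hsc.not_crosses fun g hg =>
      orientedOut_union hg (orientedOut_of_isDirCut_orient hX (ne_of_crosses he hg))
        (orientedOut_of_isDirCut_orient hY (ne_of_crosses he hg))
  obtain ⟨f, hfe, hfX⟩ := exists_crosses_ne_of_not_isBridge hbr heX heX'
  have hfY := crosses_of_not_crosses_inter_union hfX (inter_closed f) (union_closed f)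
  exact not_orientedOut_of_not_crosses_inter_union hfX (inter_closed f) (union_closed f)
    (orientedOut_of_isDirCut_orient hX hfe hfX) (orientedOut_of_isDirCut_orient hY hfe hfY)

/-- in a strongly connected partial orientation of a connected multigraph,
for an unoriented non-bridge edge it is impossible that both orientations of the edge
each create a directed cut. -/
theorem stmt1 (G : Multigraph) (hG : G.Connected) (O : G.PartialOrientation)
    (hsc : G.StronglyConnected O) (e : G.E) (he : O e = none) (hbr : ¬ G.IsBridge e) :
    ¬ (¬ G.StronglyConnected (G.orient O e true) ∧
       ¬ G.StronglyConnected (G.orient O e false)) :=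
  stmt1_general G O hsc e hbr
end
end

section
/- Let f(G) denote the number of acyclic partial orientations of a connected multigraph G. Then for any non-loop edge e, f(G) = 2·f(G \ e) + f(G/e); if e is a bridge, f(G) = 3·f(G/e); and if e is a loop, f(G) = f(G \ e). -/
open Classical

noncomputable section

/-!
Write `u → v` for the edge `e` and `R` for directed reachability in `G \ e`. Leaving `e`
unoriented, the acyclic partial orientations of `G` are those of `G \ e`; orienting it `u → v`
keeps acyclicity iff `¬ R v u`. A partial orientation of `G / e` is acyclic iff, viewed on `G \ e`,
it is acyclic with `¬ R u v` and `¬ R v u`. An acyclic orientation never has both `R u v` and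
`R v u`, so inclusion–exclusion gives `f G = 2 f (G \ e) + f (G / e)`. For a bridge, `u` and `v`
are not even connected in `G \ e`, so `f (G \ e) = f (G / e)`; a loop can never be oriented.
-/

namespace Relation

variable {α β : Type*} {r s : α → α → Prop}

theorem ReflTransGen.or_cases {A B : Set α} (hs : ∀ x y, s x y → x = y ∨ x ∈ A ∧ y ∈ B)
    {u v : α} (h : ReflTransGen (fun x y => r x y ∨ s x y) u v) :
    ReflTransGen r u v ∨ ∃ x ∈ A, ∃ y ∈ B, ReflTransGen r u x ∧ ReflTransGen r y v := by
  induction h with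
  | refl => exact .inl .refl
  | tail _ hst ih =>
    rcases hst with hr | hst
    · rcases ih with ih | ⟨x, hx, y, hy, hux, hyw⟩
      · exact .inl (ih.tail hr)
      · exact .inr ⟨x, hx, y, hy, hux, hyw.tail hr⟩
    · rcases hs _ _ hst with rfl | ⟨hw, hv⟩
      · exact ih
      · rcases ih with ih | ⟨x, hx, -, -, hux, -⟩
        · exact .inr ⟨_, hw, _, hv, ih, .refl⟩
        · exact .inr ⟨x, hx, _, hv, hux, .refl⟩

theorem ReflTransGen.of_map {f : α → β} {u v : α}
    (h : ReflTransGen (Relation.Map r f f) (f u) (f v)) :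
    ReflTransGen (fun x y => r x y ∨ f x = f y) u v := by
  suffices ∀ p q, ReflTransGen (Relation.Map r f f) p q → ∀ u v, f u = p → f v = q →
      ReflTransGen (fun x y => r x y ∨ f x = f y) u v from this _ _ h u v rfl rfl
  intro p q h
  induction h using ReflTransGen.head_induction_on with
  | refl => exact fun u v hu hv => .single (.inr (hu.trans hv.symm))
  | head hpq _ ih =>
    obtain ⟨x, y, hxy, rfl, rfl⟩ := hpq
    exact fun u v hu hv => .head (.inr hu) (.head (.inl hxy) (ih y v rfl hv))

theorem irrefl_transGen_or_eq_and_eq {a b : α} :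
    (∀ x, ¬ TransGen (fun x y => r x y ∨ x = a ∧ y = b) x x) ↔
      (∀ x, ¬ TransGen r x x) ∧ ¬ ReflTransGen r b a := by
  constructor
  · intro hirr
    refine ⟨fun x hx => hirr x (TransGen.mono (fun _ _ => Or.inl) _ _ hx), fun hba => hirr a ?_⟩
    exact .head' (.inr ⟨rfl, rfl⟩) (ReflTransGen.mono (fun _ _ => Or.inl) _ _ hba)
  · rintro ⟨hirr, hba⟩ x hx
    obtain ⟨y, hxy, hyx⟩ := TransGen.head'_iff.1 hx
    have hs : ∀ x y, (x = a ∧ y = b) → x = y ∨ x ∈ ({a} : Set α) ∧ y ∈ ({b} : Set α) :=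
      fun _ _ hxy => .inr hxy
    rcases hxy, ReflTransGen.or_cases hs hyx with
      ⟨hxy | ⟨rfl, rfl⟩, hyx | ⟨_, rfl, _, rfl, hya, hbx⟩⟩
    · exact hirr x (.head' hxy hyx)
    · exact hba (hbx.trans (.head hxy hya))
    · exact hba hyx
    · exact hba hya

theorem EqvGen.eq_or_mem_pair {a b x y : α} (h : EqvGen (fun x y => x = a ∧ y = b) x y) :
    x = y ∨ x ∈ ({a, b} : Set α) ∧ y ∈ ({a, b} : Set α) := by
  induction h with
  | rel x y h => exact .inr ⟨.inl h.1, .inr h.2⟩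
  | refl => exact .inl rfl
  | symm x y _ ih => exact ih.imp Eq.symm And.symm
  | trans x y z _ _ ih₁ ih₂ =>
    rcases ih₁ with rfl | ⟨hx, hy⟩
    · exact ih₂
    · rcases ih₂ with rfl | ⟨-, hz⟩
      · exact .inr ⟨hx, hy⟩
      · exact .inr ⟨hx, hz⟩

theorem irrefl_transGen_map_iff {f : α → β} {a b : α} (hab : a ≠ b) (hf : f a = f b)
    (hfib : ∀ x y, f x = f y → x = y ∨ x ∈ ({a, b} : Set α) ∧ y ∈ ({a, b} : Set α)) :
    (∀ p, ¬ TransGen (Relation.Map r f f) p p) ↔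
      (∀ x, ¬ TransGen r x x) ∧ ¬ ReflTransGen r a b ∧ ¬ ReflTransGen r b a := by
  have lift : ∀ {x y}, TransGen r x y → TransGen (Relation.Map r f f) (f x) (f y) :=
    fun h => TransGen.lift f (fun x y hxy => ⟨x, y, hxy, rfl, rfl⟩) _ _ h
  constructor
  · intro hirr
    refine ⟨fun x hx => hirr _ (lift hx), fun hr => hirr (f a) ?_, fun hr => hirr (f a) ?_⟩
    · simpa only [hf] using lift ((reflTransGen_iff_eq_or_transGen.1 hr).resolve_left hab.symm)
    · simpa only [hf] using lift ((reflTransGen_iff_eq_or_transGen.1 hr).resolve_left hab)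
  · rintro ⟨hirr, hab', hba'⟩ p hp
    obtain ⟨q, ⟨x, y, hxy, rfl, rfl⟩, hyx⟩ := TransGen.head'_iff.1 hp
    rcases ReflTransGen.or_cases hfib (ReflTransGen.of_map hyx) with
      hyx | ⟨x', hx', y', hy', hyx', hyx⟩
    · exact hirr x (.head' hxy hyx)
    · have hcycle : TransGen r y' x' := TransGen.trans_right hyx (.head' hxy hyx')
      rcases hx' with rfl | rfl <;> rcases hy' with rfl | rfl
      exacts [hirr _ hcycle, hba' hcycle.to_reflTransGen, hab' hcycle.to_reflTransGen,
        hirr _ hcycle]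

end Relation

theorem Nat.card_and_not_add_card_and_not {α : Type*} [Finite α] (P Q R : α → Prop)
    (h : ∀ a, P a → ¬ (Q a ∧ R a)) :
    Nat.card {a // P a ∧ ¬ Q a} + Nat.card {a // P a ∧ ¬ R a} =
      Nat.card {a // P a} + Nat.card {a // P a ∧ ¬ Q a ∧ ¬ R a} := by
  have key := Set.ncard_union_add_ncard_inter {a | P a ∧ ¬ Q a} {a | P a ∧ ¬ R a}
  have hunion : {a | P a ∧ ¬ Q a} ∪ {a | P a ∧ ¬ R a} = {a | P a} :=
    Set.ext fun a => by have := h a; simp only [Set.mem_union, Set.mem_ofPred_eq]; tauto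
  have hinter : {a | P a ∧ ¬ Q a} ∩ {a | P a ∧ ¬ R a} = {a | P a ∧ ¬ Q a ∧ ¬ R a} :=
    Set.ext fun a => by simp only [Set.mem_inter_iff, Set.mem_ofPred_eq]; tauto
  rw [hunion, hinter] at key
  exact key.symm

namespace Multigraph

open Relation

variable (G : Multigraph)

theorem acyclic_iff_irrefl_transGen (O : G.PartialOrientation) :
    G.Acyclic O ↔ ∀ v, ¬ TransGen (G.dAdj O) v v := by
  constructor
  · intro hO v hv
    obtain ⟨w, ⟨f, b, hf, rfl, rfl⟩, hwv⟩ := TransGen.head'_iff.1 hv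
    exact hO ⟨f, b, hf, hwv⟩
  · rintro hO ⟨f, b, hf, hr⟩
    exact hO _ (.head' ⟨f, b, hf, rfl, rfl⟩ hr)

theorem Acyclic.not_dReach_of_dReach {O : G.PartialOrientation} (hO : G.Acyclic O) {u v : G.V}
    (huv : u ≠ v) (h : G.dReach O u v) : ¬ G.dReach O v u := fun h' =>
  (G.acyclic_iff_irrefl_transGen O).1 hO u
    (TransGen.trans_left ((reflTransGen_iff_eq_or_transGen.1 h).resolve_left huv.symm) h')

theorem reachOn_symm {S : Set G.E} {u v : G.V} (h : G.reachOn S u v) : G.reachOn S v u :=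
  ReflTransGen.mono (fun _ _ ⟨f, hf, hfuv⟩ => ⟨f, hf, hfuv.symm⟩) _ _ (reflTransGen_swap.2 h)

variable (e : G.E)

theorem reachOn_of_dReach_deleteEdge {O' : (G.deleteEdge e).PartialOrientation} {u v : G.V}
    (h : (G.deleteEdge e).dReach O' u v) : G.reachOn {f | f ≠ e} u v := by
  refine ReflTransGen.mono ?_ _ _ h
  rintro _ _ ⟨f, b, -, rfl, rfl⟩
  cases b
  exacts [⟨f.1, f.2, .inr ⟨rfl, rfl⟩⟩, ⟨f.1, f.2, .inl ⟨rfl, rfl⟩⟩]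

def extend (O' : (G.deleteEdge e).PartialOrientation) (x : Option Bool) : G.PartialOrientation :=
  (Equiv.funSplitAt e (Option Bool)).symm (x, O')

theorem extend_apply (O' : (G.deleteEdge e).PartialOrientation) (x : Option Bool) (f : G.E) :
    G.extend e O' x f = if h : f = e then x else O' ⟨f, h⟩ := by
  simp [extend, Equiv.funSplitAt_symm_apply]

theorem dAdj_extend (O' : (G.deleteEdge e).PartialOrientation) (x : Option Bool) (u v : G.V) :
    G.dAdj (G.extend e O' x) u v ↔
      (G.deleteEdge e).dAdj O' u v ∨ ∃ b, x = some b ∧ G.dtail e b = u ∧ G.dhead e b = v := by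
  constructor
  · rintro ⟨f, b, hf, rfl, rfl⟩
    by_cases hfe : f = e
    · subst hfe
      exact .inr ⟨b, by simpa [extend_apply] using hf, rfl, rfl⟩
    · exact .inl ⟨⟨f, hfe⟩, b, by simpa [extend_apply, hfe] using hf, rfl, rfl⟩
  · rintro (⟨f, b, hf, rfl, rfl⟩ | ⟨b, rfl, rfl, rfl⟩)
    · exact ⟨f.1, b, by rw [extend_apply, dif_neg f.2]; exact hf, rfl, rfl⟩
    · exact ⟨e, b, by simp [extend_apply], rfl, rfl⟩

theorem acyclic_extend_none (O' : (G.deleteEdge e).PartialOrientation) :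
    G.Acyclic (G.extend e O' none) ↔ (G.deleteEdge e).Acyclic O' := by
  have hadj : G.dAdj (G.extend e O' none) = (G.deleteEdge e).dAdj O' := by
    ext u v
    simp [dAdj_extend]
  rw [acyclic_iff_irrefl_transGen, acyclic_iff_irrefl_transGen, hadj]
  rfl

theorem acyclic_extend_some (O' : (G.deleteEdge e).PartialOrientation) (b : Bool) :
    G.Acyclic (G.extend e O' (some b)) ↔
      (G.deleteEdge e).Acyclic O' ∧ ¬ (G.deleteEdge e).dReach O' (G.dhead e b) (G.dtail e b) := by
  have hadj : G.dAdj (G.extend e O' (some b)) =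
      fun u v => (G.deleteEdge e).dAdj O' u v ∨ u = G.dtail e b ∧ v = G.dhead e b := by
    ext u v
    simp only [dAdj_extend, Option.some.injEq, eq_comm, exists_eq_left']
    exact Iff.rfl
  rw [acyclic_iff_irrefl_transGen, acyclic_iff_irrefl_transGen, hadj]
  exact irrefl_transGen_or_eq_and_eq

theorem dAdj_contractEdge (O' : (G.deleteEdge e).PartialOrientation) :
    (G.contractEdge e).dAdj O' =
      Relation.Map ((G.deleteEdge e).dAdj O') (Quot.mk _) (Quot.mk _) := by
  ext p q
  constructor
  · rintro ⟨f, b, hf, rfl, rfl⟩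
    exact ⟨_, _, ⟨f, b, hf, rfl, rfl⟩, by cases b <;> rfl, by cases b <;> rfl⟩
  · rintro ⟨_, _, ⟨f, b, hf, rfl, rfl⟩, rfl, rfl⟩
    exact ⟨f, b, hf, by cases b <;> rfl, by cases b <;> rfl⟩

theorem acyclic_contractEdge_iff (hne : G.fst e ≠ G.snd e)
    (O' : (G.deleteEdge e).PartialOrientation) :
    (G.contractEdge e).Acyclic O' ↔ (G.deleteEdge e).Acyclic O' ∧
      ¬ (G.deleteEdge e).dReach O' (G.fst e) (G.snd e) ∧
      ¬ (G.deleteEdge e).dReach O' (G.snd e) (G.fst e) := by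
  refine ((G.contractEdge e).acyclic_iff_irrefl_transGen O').trans ?_
  rw [acyclic_iff_irrefl_transGen, dAdj_contractEdge]
  exact irrefl_transGen_map_iff hne (Quot.sound ⟨rfl, rfl⟩)
    fun _ _ h => (Quot.eq.1 h).eq_or_mem_pair

theorem numAcyclic_eq_sum : G.numAcyclic = ∑ x : Option Bool,
    Nat.card {O' : (G.deleteEdge e).PartialOrientation // G.Acyclic (G.extend e O' x)} := by
  rw [numAcyclic, ← Nat.card_sigma]
  exact Nat.card_congr ((Equiv.funSplitAt e (Option Bool)).symm.subtypeEquivOfSubtype.symm.trans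
    (Equiv.subtypeProdEquivSigmaSubtype fun x O' => G.Acyclic (G.extend e O' x)))

theorem numAcyclic_eq_add : G.numAcyclic = (G.deleteEdge e).numAcyclic +
    Nat.card {O' : (G.deleteEdge e).PartialOrientation // (G.deleteEdge e).Acyclic O' ∧
      ¬ (G.deleteEdge e).dReach O' (G.snd e) (G.fst e)} +
    Nat.card {O' : (G.deleteEdge e).PartialOrientation // (G.deleteEdge e).Acyclic O' ∧
      ¬ (G.deleteEdge e).dReach O' (G.fst e) (G.snd e)} := by
  rw [numAcyclic_eq_sum, Fintype.sum_option, Fintype.sum_bool, add_assoc]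
  simp only [acyclic_extend_none, acyclic_extend_some]
  rfl

theorem numAcyclic_contractEdge (hne : G.fst e ≠ G.snd e) :
    (G.contractEdge e).numAcyclic =
      Nat.card {O' : (G.deleteEdge e).PartialOrientation // (G.deleteEdge e).Acyclic O' ∧
        ¬ (G.deleteEdge e).dReach O' (G.fst e) (G.snd e) ∧
        ¬ (G.deleteEdge e).dReach O' (G.snd e) (G.fst e)} :=
  Nat.card_congr (Equiv.subtypeEquivRight (G.acyclic_contractEdge_iff e hne))

theorem numAcyclic_deletion_contraction (hne : ¬ G.IsLoop e) :
    G.numAcyclic = 2 * (G.deleteEdge e).numAcyclic + (G.contractEdge e).numAcyclic := by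
  have hcount := Nat.card_and_not_add_card_and_not (G.deleteEdge e).Acyclic
    (fun O' => (G.deleteEdge e).dReach O' (G.fst e) (G.snd e))
    (fun O' => (G.deleteEdge e).dReach O' (G.snd e) (G.fst e))
    fun _ hO ⟨h, h'⟩ => hO.not_dReach_of_dReach _ hne h h'
  have hdel : (G.deleteEdge e).numAcyclic = Nat.card {O' // (G.deleteEdge e).Acyclic O'} := rfl
  rw [G.numAcyclic_eq_add e, G.numAcyclic_contractEdge e hne]
  omega

theorem IsBridge.not_isLoop (h : G.IsBridge e) : ¬ G.IsLoop e :=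
  fun hloop => h (hloop ▸ .refl)

theorem numAcyclic_deleteEdge_of_isBridge (h : G.IsBridge e) :
    (G.deleteEdge e).numAcyclic = (G.contractEdge e).numAcyclic := by
  rw [G.numAcyclic_contractEdge e h.not_isLoop]
  refine Nat.card_congr (Equiv.subtypeEquivRight fun O' => (and_iff_left ⟨?_, ?_⟩).symm)
  · exact fun hr => h (G.reachOn_of_dReach_deleteEdge e hr)
  · exact fun hr => h (G.reachOn_symm (G.reachOn_of_dReach_deleteEdge e hr))

theorem numAcyclic_of_isLoop (hloop : G.IsLoop e) :
    G.numAcyclic = (G.deleteEdge e).numAcyclic := by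
  have hempty (v : G.V) : Nat.card {O' : (G.deleteEdge e).PartialOrientation //
      (G.deleteEdge e).Acyclic O' ∧ ¬ (G.deleteEdge e).dReach O' v v} = 0 :=
    Nat.card_eq_zero.2 (.inl ⟨fun O' => O'.2.2 .refl⟩)
  have hloop : G.fst e = G.snd e := hloop
  rw [G.numAcyclic_eq_add e, hloop, hempty, add_zero, add_zero]

end Multigraph

theorem stmt2_general (G : Multigraph) (e : G.E) :
    (¬ G.IsLoop e →
      G.numAcyclic = 2 * (G.deleteEdge e).numAcyclic + (G.contractEdge e).numAcyclic) ∧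
    (G.IsBridge e → G.numAcyclic = 3 * (G.contractEdge e).numAcyclic) ∧
    (G.IsLoop e → G.numAcyclic = (G.deleteEdge e).numAcyclic) := by
  refine ⟨G.numAcyclic_deletion_contraction e, fun hbridge => ?_, G.numAcyclic_of_isLoop e⟩
  rw [G.numAcyclic_deletion_contraction e hbridge.not_isLoop,
    G.numAcyclic_deleteEdge_of_isBridge e hbridge]
  ring

/-- deletion-contraction for the number of acyclic partial orientations. -/
theorem stmt2 (G : Multigraph) (hG : G.Connected) (e : G.E) :
    (¬ G.IsLoop e →
      G.numAcyclic = 2 * (G.deleteEdge e).numAcyclic + (G.contractEdge e).numAcyclic) ∧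
    (G.IsBridge e → G.numAcyclic = 3 * (G.contractEdge e).numAcyclic) ∧
    (G.IsLoop e → G.numAcyclic = (G.deleteEdge e).numAcyclic) :=
  stmt2_general G e
end
end

section
/- Fix a total order < on the edges and a reference full orientation A of a connected multigraph G. If one repeatedly reverses nonminimal directed cuts of a partial orientation (a directed cut is nonminimal when its <-minimum edge is oriented oppositely to A), this process terminates: no sequence of such reversals can return to the starting partial orientation. -/
open Classical

noncomputable section

/-- `O'` is obtained from `O` by reversing one *nonminimal* directed cut. -/
def Multigraph.nonminCutRev (G : Multigraph) [LinearOrder G.E] (A : G.E → Bool)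
    (O O' : G.PartialOrientation) : Prop :=
  ∃ X, G.IsDirCut O X ∧ ¬ G.MinimalCut A O X ∧
    (∀ e, ¬ G.crosses X e → O' e = O e) ∧ (∀ e, G.crosses X e → O' e = (O e).map not)

/-! Put the set of edges oriented against `A` in the dual edge order and compare such sets
colexicographically, i.e. by the `<`-least edge on which they differ. Reversing a nonminimal
directed cut takes its least edge from against `A` to along `A` and changes only crossing
edges, all larger, so this set strictly decreases at every step and no orientation recurs. -/

namespace Multigraph

open OrderDual

variable {G : Multigraph} {O : G.PartialOrientation} {X : Set G.V}

lemma IsDirCut.exists_eq_some (hX : G.IsDirCut O X) {e : G.E} (he : G.crosses X e) :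
    ∃ b, O e = some b := by
  by_cases hfst : G.fst e ∈ X
  · exact ⟨true, (hX.2 e he).1 hfst⟩
  · exact ⟨false, (hX.2 e he).2 (by unfold crosses at he; tauto)⟩

variable [LinearOrder G.E]

def reversedEdges (A : G.E → Bool) (O : G.PartialOrientation) : Finset G.Eᵒᵈ :=
  {e | O (ofDual e) = some (!A (ofDual e))}

lemma nonminCutRev.reversedEdges_lt {A : G.E → Bool} {O' : G.PartialOrientation}
    (h : G.nonminCutRev A O O') :
    toColex (G.reversedEdges A O') < toColex (G.reversedEdges A O) := by
  obtain ⟨X, hX, hnonmin, hsame, hflip⟩ := h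
  obtain ⟨e₀, he₀, hmin⟩ := Set.exists_min_image {e | G.crosses X e} id (Set.toFinite _) hX.1
  have hO : O e₀ = some (!A e₀) := by
    obtain ⟨b, hb⟩ := hX.exists_eq_some he₀
    have hbA : b ≠ A e₀ := fun hbA => hnonmin ⟨e₀, he₀, hmin, hbA ▸ hb⟩
    rw [hb, Bool.eq_not_iff.mpr hbA]
  rw [Finset.Colex.toColex_lt_toColex_iff_exists_forall_lt]
  refine ⟨toDual e₀, by simp [reversedEdges, hO], by simp [reversedEdges, hflip e₀ he₀, hO], ?_⟩
  intro e he' he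
  simp only [reversedEdges, Finset.mem_filter, Finset.mem_univ, true_and] at he' he
  have hcross : G.crosses X (ofDual e) := by
    by_contra hnot
    exact he (hsame _ hnot ▸ he')
  exact (hmin _ hcross).lt_of_ne (by rintro rfl; exact he hO)

end Multigraph

theorem stmt6_general (G : Multigraph) [LinearOrder G.E] (A : G.E → Bool)
    (O : G.PartialOrientation) :
    ¬ Relation.TransGen (G.nonminCutRev A) O O := by
  intro h
  have hlt := h.lift (p := (· > ·)) (fun O => toColex (G.reversedEdges A O)) fun _ _ hstep =>
    hstep.reversedEdges_lt
  rw [Relation.transGen_eq_self] at hlt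
  exact lt_irrefl _ hlt

/-- repeatedly reversing nonminimal directed cuts terminates; no nonempty
sequence of such reversals returns to the starting partial orientation. -/
theorem stmt6 (G : Multigraph) [LinearOrder G.E] (A : G.E → Bool) (hG : G.Connected)
    (O : G.PartialOrientation) :
    ¬ Relation.TransGen (G.nonminCutRev A) O O :=
  stmt6_general G A O
end
end

section
/- If two partial orientations O and O' of a connected multigraph orient the same set of edges and are related by a sequence of directed cut reversals, then the set of edges on which they differ decomposes as a disjoint union of directed cuts of O. Consequently, each equivalence class of partial orientations modulo cut reversals contains exactly one cut minimal partial orientation (with respect to any fixed pair (<, A)). -/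
open Classical

noncomputable section

/-!
If `O` reaches `O'` by cut reversals, let `f v` count how often `v` lay on the source side of a
reversed cut. Along every edge reversed between `O` and `O'` the potential `f` drops by exactly
one, and along every other edge it is constant. Hence the nonempty level cuts `{v | t ≤ f v}` are
directed cuts of `O`, pairwise edge-disjoint, and together they cross exactly the reversed edges.

Two cut minimal orientations in one class coincide: otherwise some level cut is directed in the
first and, reversed, in the second, so its `<`-minimum edge would be oriented as in `A` in both.
For existence, reversing a non-minimal directed cut changes only edges from its minimum edge on,
and turns that edge from against `A` to along `A`; so it strictly decreases the set of edges
oriented against `A` in the lexicographic order along `<`, and a lex-minimal member of the class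
is cut minimal.
-/

namespace Multigraph

variable {G : Multigraph} {O O' : G.PartialOrientation} {X : Set G.V}

lemma crosses_compl {e : G.E} : G.crosses Xᶜ e ↔ G.crosses X e := by
  simp only [crosses, Set.mem_compl_iff, not_iff_not]

lemma crosses_iff_dtail_dhead {e : G.E} (b : Bool) :
    G.crosses X e ↔ ¬ (G.dtail e b ∈ X ↔ G.dhead e b ∈ X) := by
  cases b <;> simp [crosses, dtail, dhead, iff_comm]

lemma dtail_not (e : G.E) (b : Bool) : G.dtail e (!b) = G.dhead e b := by
  cases b <;> rfl

lemma dhead_not (e : G.E) (b : Bool) : G.dhead e (!b) = G.dtail e b := by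
  cases b <;> rfl

lemma isDirCut_iff_s7 :
    G.IsDirCut O X ↔ (∃ e, G.crosses X e) ∧
      ∀ e, G.crosses X e → ∃ b, O e = some b ∧ G.dtail e b ∈ X := by
  refine and_congr_right fun _ => forall_congr' fun e => imp_congr_right fun hc => ?_
  by_cases hf : G.fst e ∈ X
  · have hs : G.snd e ∉ X := fun hs => hc ⟨fun _ => hs, fun _ => hf⟩
    simp [hf, hs, dtail, Bool.exists_bool]
  · have hs : G.snd e ∈ X := by unfold crosses at hc; tauto
    simp [hf, hs, dtail, Bool.exists_bool]

lemma IsDirCut.exists_orient (hX : G.IsDirCut O X) {e : G.E} (hc : G.crosses X e) :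
    ∃ b, O e = some b ∧ G.dtail e b ∈ X ∧ G.dhead e b ∉ X := by
  obtain ⟨b, hb, ht⟩ := (isDirCut_iff_s7.1 hX).2 e hc
  exact ⟨b, hb, ht, fun hh => (crosses_iff_dtail_dhead b).1 hc (iff_of_true ht hh)⟩

lemma IsDirCut.compl_of_reversed (hX : G.IsDirCut O X)
    (hrev : ∀ e, G.crosses X e → O' e = (O e).map not) : G.IsDirCut O' Xᶜ := by
  refine isDirCut_iff_s7.2 ⟨hX.1.imp fun _ => crosses_compl.2, fun e hc => ?_⟩
  obtain ⟨b, hb, -, hh⟩ := hX.exists_orient (crosses_compl.1 hc)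
  exact ⟨!b, by rw [hrev e (crosses_compl.1 hc), hb]; rfl, by rwa [dtail_not]⟩

lemma cutRev_symm (h : G.cutRev O O') : G.cutRev O' O := by
  obtain ⟨X, hX, hout, hin⟩ := h
  refine ⟨Xᶜ, hX.compl_of_reversed hin, fun e he => (hout e (mt crosses_compl.2 he)).symm,
    fun e he => ?_⟩
  obtain ⟨b, hb, -⟩ := hX.exists_orient (crosses_compl.1 he)
  simp [hin e (crosses_compl.1 he), hb]

lemma reflTransGen_cutRev_symm (h : Relation.ReflTransGen G.cutRev O O') :
    Relation.ReflTransGen G.cutRev O' O :=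
  haveI : Std.Symm G.cutRev := ⟨fun _ _ => cutRev_symm⟩
  Std.Symm.symm _ _ h

def IsCutPotential (O O' : G.PartialOrientation) (f : G.V → ℤ) : Prop :=
  ∀ e, (O e = none → O' e = none ∧ f (G.fst e) = f (G.snd e)) ∧
    ∀ b, O e = some b →
      (O' e = some b ∧ f (G.dtail e b) = f (G.dhead e b)) ∨
      (O' e = some (!b) ∧ f (G.dtail e b) = f (G.dhead e b) + 1)

lemma IsCutPotential.cutRev {O₁ O₂ : G.PartialOrientation} {f : G.V → ℤ}
    (hf : G.IsCutPotential O O₁ f) (hX : G.IsDirCut O₁ X)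
    (hout : ∀ e, ¬ G.crosses X e → O₂ e = O₁ e)
    (hin : ∀ e, G.crosses X e → O₂ e = (O₁ e).map not) :
    G.IsCutPotential O O₂ (fun v => f v + if v ∈ X then 1 else 0) := by
  intro e
  by_cases hc : G.crosses X e
  · obtain ⟨c, hc₁, ht, hh⟩ := hX.exists_orient hc
    rw [hin e hc, hc₁]
    cases hOe : O e with
    | none => simp [((hf e).1 hOe).1] at hc₁
    | some b =>
      refine ⟨nofun, fun b' hb' => ?_⟩
      obtain rfl := Option.some.inj hb'
      rcases (hf e).2 b hOe with ⟨hb, hfb⟩ | ⟨hb, hfb⟩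
      · obtain rfl := Option.some.inj (hc₁.symm.trans hb)
        right
        simp [ht, hh, hfb]
      · obtain rfl := Option.some.inj (hc₁.symm.trans hb)
        rw [dtail_not] at ht
        rw [dhead_not] at hh
        left
        simp [ht, hh, hfb]
  · have hfs : G.fst e ∈ X ↔ G.snd e ∈ X := not_not.1 hc
    have hth : ∀ b, G.dtail e b ∈ X ↔ G.dhead e b ∈ X :=
      fun b => not_not.1 (mt (crosses_iff_dtail_dhead b).2 hc)
    rw [hout e hc]
    refine ⟨fun hOe => ?_, fun b hOe => ?_⟩
    · simp only [hfs, ((hf e).1 hOe).1, ((hf e).1 hOe).2, and_self]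
    · simp only [hth b, add_right_comm _ _ (1 : ℤ), add_left_inj]
      exact (hf e).2 b hOe

lemma exists_isCutPotential (h : Relation.ReflTransGen G.cutRev O O') :
    ∃ f, G.IsCutPotential O O' f := by
  induction h with
  | refl => exact ⟨0, fun e => ⟨fun h => ⟨h, rfl⟩, fun b h => Or.inl ⟨h, rfl⟩⟩⟩
  | tail _ hstep ih =>
    obtain ⟨f, hf⟩ := ih
    obtain ⟨X, hX, hout, hin⟩ := hstep
    exact ⟨_, hf.cutRev hX hout hin⟩

section Levels

variable {f : G.V → ℤ} {t : ℤ} {e : G.E}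

lemma IsCutPotential.of_crosses_level (hf : G.IsCutPotential O O' f)
    (hc : G.crosses {v | t ≤ f v} e) :
    ∃ b, O e = some b ∧ O' e = some (!b) ∧ f (G.dtail e b) = t ∧ f (G.dhead e b) + 1 = t := by
  cases hOe : O e with
  | none =>
    have hfe := ((hf e).1 hOe).2
    exact absurd (by simp [hfe]) hc
  | some b =>
    rw [crosses_iff_dtail_dhead b, Set.mem_ofPred_eq, Set.mem_ofPred_eq] at hc
    rcases (hf e).2 b hOe with ⟨-, hfb⟩ | ⟨hb, hfb⟩
    · exact absurd (by rw [hfb]) hc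
    · refine ⟨b, rfl, hb, ?_⟩
      by_cases ht : t ≤ f (G.dtail e b) <;> simp only [ht, true_iff, false_iff, not_le] at hc
        <;> omega

lemma IsCutPotential.exists_crosses_level (hf : G.IsCutPotential O O' f) (hne : O e ≠ O' e) :
    ∃ t, G.crosses {v | t ≤ f v} e := by
  cases hOe : O e with
  | none => exact absurd (hOe.trans ((hf e).1 hOe).1.symm) hne
  | some b =>
    rcases (hf e).2 b hOe with ⟨hb, -⟩ | ⟨-, hfb⟩
    · exact absurd (hOe.trans hb.symm) hne
    · refine ⟨f (G.dtail e b), (crosses_iff_dtail_dhead b).2 ?_⟩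
      simp only [Set.mem_ofPred_eq, le_refl, true_iff]
      omega

lemma IsCutPotential.isDirCut_level (hf : G.IsCutPotential O O' f)
    (hX : ∃ e, G.crosses {v | t ≤ f v} e) : G.IsDirCut O {v | t ≤ f v} :=
  isDirCut_iff_s7.2 ⟨hX, fun _ hc => by
    obtain ⟨b, hb, -, ht, -⟩ := hf.of_crosses_level hc
    exact ⟨b, hb, ht.ge⟩⟩

lemma IsCutPotential.isDirCut_compl_level (hf : G.IsCutPotential O O' f)
    (hX : ∃ e, G.crosses {v | t ≤ f v} e) : G.IsDirCut O' {v | t ≤ f v}ᶜ :=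
  (hf.isDirCut_level hX).compl_of_reversed fun _ hc => by
    obtain ⟨b, hb, hb', -⟩ := hf.of_crosses_level hc
    rw [hb, hb']
    rfl

end Levels

theorem exists_dirCut_decomposition (h : Relation.ReflTransGen G.cutRev O O') :
    ∃ l : List (Set G.V), (∀ X ∈ l, G.IsDirCut O X) ∧
      l.Pairwise (fun X Y => ∀ e, G.crosses X e → ¬ G.crosses Y e) ∧
      ∀ e, (O e ≠ O' e ↔ ∃ X ∈ l, G.crosses X e) := by
  obtain ⟨f, hf⟩ := exists_isCutPotential h
  let levels : Finset ℤ := (Finset.univ.image f).filter fun t => ∃ e, G.crosses {v | t ≤ f v} e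
  refine ⟨levels.toList.map fun t => {v | t ≤ f v}, ?_, ?_, fun e => ⟨fun hne => ?_, ?_⟩⟩
  · simp only [List.forall_mem_map, Finset.mem_toList, levels, Finset.mem_filter]
    exact fun t ht => hf.isDirCut_level ht.2
  · refine List.pairwise_map.2 ((Finset.nodup_toList _).imp fun hne e hs ht => hne ?_)
    obtain ⟨b, hb, -, hs, -⟩ := hf.of_crosses_level hs
    obtain ⟨b', hb', -, ht, -⟩ := hf.of_crosses_level ht
    obtain rfl := Option.some.inj (hb.symm.trans hb')
    exact hs.symm.trans ht
  · obtain ⟨t, ht⟩ := hf.exists_crosses_level hne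
    obtain ⟨b, -, -, hbt, -⟩ := hf.of_crosses_level ht
    refine ⟨_, List.mem_map.2 ⟨t, ?_, rfl⟩, ht⟩
    simp only [Finset.mem_toList, levels, Finset.mem_filter, Finset.mem_image]
    exact ⟨⟨_, Finset.mem_univ _, hbt⟩, e, ht⟩
  · rintro ⟨X, hX, hc⟩
    obtain ⟨t, -, rfl⟩ := List.mem_map.1 hX
    obtain ⟨b, hb, hb', -⟩ := hf.of_crosses_level hc
    simp [hb, hb']

def reverseCut (O : G.PartialOrientation) (X : Set G.V) : G.PartialOrientation :=
  fun e => if G.crosses X e then (O e).map not else O e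

lemma IsDirCut.cutRev_reverseCut (hX : G.IsDirCut O X) : G.cutRev O (G.reverseCut O X) :=
  ⟨X, hX, fun _ he => if_neg he, fun _ he => if_pos he⟩

section CutMinimal

variable [LinearOrder G.E] {A : G.E → Bool}

theorem CutMinimal.eq_of_reflTransGen {O₁ O₂ : G.PartialOrientation}
    (h : Relation.ReflTransGen G.cutRev O₁ O₂) (h₁ : G.CutMinimal A O₁)
    (h₂ : G.CutMinimal A O₂) : O₁ = O₂ := by
  by_contra hne
  obtain ⟨e, he⟩ := Function.ne_iff.1 hne
  obtain ⟨f, hf⟩ := exists_isCutPotential h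
  obtain ⟨t, ht⟩ := hf.exists_crosses_level he
  obtain ⟨e₁, hc₁, hmin₁, hA₁⟩ := h₁ _ (hf.isDirCut_level ⟨e, ht⟩)
  obtain ⟨e₂, hc₂, hmin₂, hA₂⟩ := h₂ _ (hf.isDirCut_compl_level ⟨e, ht⟩)
  obtain rfl : e₁ = e₂ :=
    le_antisymm (hmin₁ e₂ (crosses_compl.1 hc₂)) (hmin₂ e₁ (crosses_compl.2 hc₁))
  obtain ⟨b, hb, hb', -⟩ := hf.of_crosses_level hc₁
  rw [hA₁, Option.some_inj] at hb
  rw [hA₂, Option.some_inj, hb] at hb'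
  exact Bool.not_ne_self b hb'.symm

def disagreement (A : G.E → Bool) (O : G.PartialOrientation) : Lex (G.E → Bool) :=
  toLex fun e => decide (O e = some (!A e))

lemma IsDirCut.disagreement_reverseCut_lt (hX : G.IsDirCut O X) (hmin : ¬ G.MinimalCut A O X) :
    disagreement A (G.reverseCut O X) < disagreement A O := by
  obtain ⟨e, hc : G.crosses X e, hle⟩ := wellFounded_lt.has_min {e | G.crosses X e} hX.1
  obtain ⟨b, hb, -⟩ := hX.exists_orient hc
  have hbA : b = !A e := by
    by_contra hbA
    exact hmin ⟨e, hc, fun e' he' => not_lt.1 (hle e' he'), by simpa [hb] using hbA⟩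
  refine ⟨e, fun j hj => ?_, ?_⟩
  · have hcj : ¬ G.crosses X j := fun hcj => hle j hcj hj
    simp [disagreement, reverseCut, hcj]
  · simp [disagreement, reverseCut, hc, hb, hbA]

theorem exists_cutMinimal (A : G.E → Bool) (O : G.PartialOrientation) :
    ∃ O', Relation.ReflTransGen G.cutRev O O' ∧ G.CutMinimal A O' := by
  obtain ⟨O', hO', hmin⟩ := (InvImage.wf (disagreement A) wellFounded_lt).has_min
    {O' | Relation.ReflTransGen G.cutRev O O'} ⟨O, .refl⟩
  refine ⟨O', hO', fun X hX => by_contra fun hX' => ?_⟩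
  exact hmin _ (hO'.tail hX.cutRev_reverseCut) (hX.disagreement_reverseCut_lt hX')

end CutMinimal

end Multigraph

theorem stmt7_general (G : Multigraph) [LinearOrder G.E] (A : G.E → Bool) :
    (∀ O O' : G.PartialOrientation, (∀ e, O e = none ↔ O' e = none) →
      Relation.ReflTransGen G.cutRev O O' →
      ∃ l : List (Set G.V), (∀ X ∈ l, G.IsDirCut O X) ∧
        l.Pairwise (fun X Y => ∀ e, G.crosses X e → ¬ G.crosses Y e) ∧
        ∀ e, (O e ≠ O' e ↔ ∃ X ∈ l, G.crosses X e)) ∧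
    (∀ O : G.PartialOrientation,
      ∃! O', Relation.ReflTransGen G.cutRev O O' ∧ G.CutMinimal A O') := by
  refine ⟨fun O O' _ h => Multigraph.exists_dirCut_decomposition h, fun O => ?_⟩
  obtain ⟨O', hO', hmin⟩ := Multigraph.exists_cutMinimal A O
  exact ⟨O', ⟨hO', hmin⟩, fun O'' ⟨hO'', hmin''⟩ =>
    hmin''.eq_of_reflTransGen ((Multigraph.reflTransGen_cutRev_symm hO'').trans hO') hmin⟩

/-- partial orientations related by directed cut reversals differ on a
disjoint union of directed cuts of the first; consequently every equivalence class modulo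
cut reversals contains exactly one cut minimal partial orientation. -/
theorem stmt7 (G : Multigraph) [LinearOrder G.E] (A : G.E → Bool) (hG : G.Connected) :
    (∀ O O' : G.PartialOrientation, (∀ e, O e = none ↔ O' e = none) →
      Relation.ReflTransGen G.cutRev O O' →
      ∃ l : List (Set G.V), (∀ X ∈ l, G.IsDirCut O X) ∧
        l.Pairwise (fun X Y => ∀ e, G.crosses X e → ¬ G.crosses Y e) ∧
        ∀ e, (O e ≠ O' e ↔ ∃ X ∈ l, G.crosses X e)) ∧
    (∀ O : G.PartialOrientation,
      ∃! O', Relation.ReflTransGen G.cutRev O O' ∧ G.CutMinimal A O') :=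
  stmt7_general G A
end
end
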